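/- Let a,b ∈ (0,1), c > 0 with a < c and b < c. Define F(x) = ₂F₁(a,b;c;x) and F₁(x) = F(1−x). Then f(x) = x(1−x)F(x)F₁(x) is increasing on (0,1/2] and decreasing on [1/2,1). -/

import Mathlib

/-- The rising factorial (Pochhammer symbol) `(a)ₙ = a(a+1)⋯(a+n−1)`. -/
def ascFac (a : ℝ) : ℕ → ℝ
  | 0 => 1
  | n + 1 => ascFac a n * (a + n)

/-- The Gaussian hypergeometric function `₂F₁(a,b;c;x) = Σ (a)ₙ(b)ₙ/((c)ₙ n!) xⁿ`. -/
noncomputable def hyperF (a b c x : ℝ) : ℝ :=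
  ∑' n : ℕ, ascFac a n * ascFac b n / (ascFac c n * n.factorial) * x ^ n

/-! Write `f(x) = g(x) g(1 - x)` with `g(x) = x F(x)`. Then
`x(1 - x) f'(x) = f(x) (φ(x) - φ(1 - x))` for `φ(x) = x(1 - x) g'(x) / g(x)`, so it suffices
that `φ = 1 - x + x(1 - x) F'/F` decreases on `(0, 1)`; the second half follows from
`f(1 - x) = f(x)`. Using the hypergeometric equation `x(1 - x)F'' + (c - (a + b + 1)x)F' = abF`,
the inequality `φ' ≤ 0` becomes the nonnegativity of a quadratic form in `F` and `V = (1 - x)F'`,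
which follows from `(a + b - c)F ≤ V` and `ab(1 - x)F ≤ cV ≤ abF`. Each of these three bounds
says that a power series has nonnegative coefficients, which is read off from the recurrence
`(c + n)(n + 1)q(n+1) = (a + n)(b + n)q(n)` for the coefficients `q` of `F`. -/

open Set

/-- Bounded by a polynomial of degree `k` in `n`; the binomial form is preserved exactly by
`derivCoeff`. -/
def HasPolyGrowth (g : ℕ → ℝ) : Prop :=
  ∃ (K : ℝ) (k : ℕ), ∀ n, |g n| ≤ K * (n + k).choose k

noncomputable def powSeries (g : ℕ → ℝ) (x : ℝ) : ℝ := ∑' n, g n * x ^ n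

def derivCoeff (g : ℕ → ℝ) (n : ℕ) : ℝ := (n + 1) * g (n + 1)

theorem hasSum_mul_powSeries_derivCoeff {g : ℕ → ℝ} {x : ℝ}
    (hs : Summable fun n => derivCoeff g n * x ^ n) :
    HasSum (fun n => n * g n * x ^ n) (x * powSeries (derivCoeff g) x) := by
  have h := (hasSum_nat_add_iff (f := fun n : ℕ => (n : ℝ) * g n * x ^ n) 1).mp
    ((hs.hasSum.mul_left x).congr_fun fun n => by rw [derivCoeff]; push_cast; ring)
  rw [powSeries]
  simpa using h

namespace HasPolyGrowth

variable {g : ℕ → ℝ}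

theorem summable (hg : HasPolyGrowth g) {x : ℝ} (hx : |x| < 1) :
    Summable fun n => g n * x ^ n := by
  obtain ⟨K, k, hK⟩ := hg
  have hgeom := summable_choose_mul_geometric_of_norm_lt_one k (r := |x|)
    (by rwa [Real.norm_eq_abs, abs_abs])
  refine .of_norm_bounded (hgeom.mul_left K) fun n => ?_
  rw [Real.norm_eq_abs, abs_mul, abs_pow, ← mul_assoc]
  exact mul_le_mul_of_nonneg_right (hK n) (by positivity)

theorem derivCoeff (hg : HasPolyGrowth g) : HasPolyGrowth (derivCoeff g) := by
  obtain ⟨K, k, hK⟩ := hg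
  refine ⟨K * (k + 1), k + 1, fun n => ?_⟩
  have hchoose :
      ((n + 1 + k).choose k : ℝ) * (n + 1) = (n + 1 + k).choose (k + 1) * (k + 1) := by
    have := Nat.choose_succ_right_eq (n + 1 + k) k
    rw [show n + 1 + k - k = n + 1 by omega] at this
    exact_mod_cast this.symm
  rw [show n + (k + 1) = n + 1 + k by omega]
  calc |_root_.derivCoeff g n| = (n + 1) * |g (n + 1)| := by
        rw [_root_.derivCoeff, abs_mul, abs_of_pos (by positivity)]
    _ ≤ (n + 1) * (K * (n + 1 + k).choose k) := by
        gcongr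
        exact_mod_cast hK (n + 1)
    _ = K * (k + 1) * (n + 1 + k).choose (k + 1) := by
        linear_combination K * hchoose

theorem natMul (hg : HasPolyGrowth g) : HasPolyGrowth fun n => n * g n := by
  obtain ⟨K, k, hK⟩ := hg
  have hK0 : 0 ≤ K := by simpa using (abs_nonneg _).trans (hK 0)
  refine ⟨K * (k + 1), k + 1, fun n => ?_⟩
  have hchoose : ((n + k).choose k : ℝ) * n = (n + k).choose (k + 1) * (k + 1) := by
    have := Nat.choose_succ_right_eq (n + k) k
    rw [show n + k - k = n by omega] at this
    exact_mod_cast this.symm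
  have hmono : ((n + k).choose (k + 1) : ℝ) ≤ (n + (k + 1)).choose (k + 1) := by
    exact_mod_cast Nat.choose_le_choose _ (by omega)
  calc |(n : ℝ) * g n| = n * |g n| := by rw [abs_mul, Nat.abs_cast]
    _ ≤ n * (K * (n + k).choose k) := by gcongr; exact hK n
    _ = K * (k + 1) * (n + k).choose (k + 1) := by linear_combination K * hchoose
    _ ≤ K * (k + 1) * (n + (k + 1)).choose (k + 1) := by gcongr

theorem hasDerivAt_powSeries (hg : HasPolyGrowth g) {x : ℝ} (hx : |x| < 1) :
    HasDerivAt (powSeries g) (powSeries (_root_.derivCoeff g) x) x := by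
  obtain ⟨r, hxr, hr1⟩ := exists_between hx
  have hr0 : 0 ≤ r := (abs_nonneg x).trans hxr.le
  have hx_mem : x ∈ Metric.ball (0 : ℝ) r := by rwa [mem_ball_zero_iff, Real.norm_eq_abs]
  set u : ℕ → ℝ := fun n => |g n| * (n * r ^ (n - 1))
  have hu : Summable u := by
    refine (summable_nat_add_iff 1).mp
      ((hg.derivCoeff.summable (x := r) (by rwa [abs_of_nonneg hr0])).abs.congr fun n => ?_)
    simp only [u, _root_.derivCoeff, abs_mul, abs_pow, abs_of_nonneg hr0, Nat.add_sub_cancel]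
    rw [abs_of_pos (by positivity)]
    push_cast
    ring
  have hbound :
      ∀ n, ∀ y ∈ Metric.ball (0 : ℝ) r, ‖g n * (n * y ^ (n - 1))‖ ≤ u n := by
    intro n y hy
    rw [mem_ball_zero_iff, Real.norm_eq_abs] at hy
    rw [Real.norm_eq_abs, abs_mul, abs_mul, abs_pow, Nat.abs_cast]
    exact mul_le_mul_of_nonneg_left (by gcongr) (abs_nonneg _)
  refine (hasDerivAt_tsum_of_isPreconnected hu Metric.isOpen_ball
    (convex_ball (0 : ℝ) r).isPreconnected (fun n y _ => (hasDerivAt_pow n y).const_mul (g n))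
    hbound hx_mem (hg.summable hx) hx_mem).congr_deriv ?_
  rw [(Summable.of_norm_bounded hu fun n => hbound n x hx_mem).tsum_eq_zero_add]
  simp only [powSeries, _root_.derivCoeff, Nat.add_sub_cancel, CharP.cast_eq_zero, zero_mul,
    mul_zero, zero_add]
  exact tsum_congr fun n => by push_cast; ring

end HasPolyGrowth

theorem monotoneOn_mul_comp_one_sub {g g' : ℝ → ℝ}
    (hg : ∀ x ∈ Ioo (0 : ℝ) 1, HasDerivAt g (g' x) x)
    (hpos : ∀ x ∈ Ioo (0 : ℝ) 1, 0 < g x)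
    (hanti : AntitoneOn (fun x => x * (1 - x) * g' x / g x) (Ioo 0 1)) :
    MonotoneOn (fun x => g x * g (1 - x)) (Ioc 0 (1 / 2)) := by
  have hsub : Ioc (0 : ℝ) (1 / 2) ⊆ Ioo 0 1 := fun x hx => ⟨hx.1, by linarith [hx.2]⟩
  have hmem : ∀ x ∈ Ioo (0 : ℝ) 1, 1 - x ∈ Ioo (0 : ℝ) 1 := fun x hx =>
    ⟨by linarith [hx.2], by linarith [hx.1]⟩
  have hderiv : ∀ x ∈ Ioo (0 : ℝ) 1, HasDerivAt (fun x => g x * g (1 - x))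
      (g' x * g (1 - x) - g x * g' (1 - x)) x := fun x hx =>
    ((hg x hx).mul ((hg (1 - x) (hmem x hx)).comp_const_sub 1 x)).congr_deriv (by ring)
  refine monotoneOn_of_hasDerivWithinAt_nonneg (convex_Ioc 0 (1 / 2))
    (fun x hx => (hderiv x (hsub hx)).continuousAt.continuousWithinAt)
    (fun x hx => (hderiv x (hsub (interior_subset hx))).hasDerivWithinAt) fun x hx => ?_
  rw [interior_Ioc] at hx
  have hx' : x ∈ Ioo (0 : ℝ) 1 := ⟨hx.1, by linarith [hx.2]⟩
  have h := hanti hx' (hmem x hx') (by linarith [hx.2])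
  simp only [sub_sub_cancel] at h
  rw [div_le_div_iff₀ (hpos _ (hmem x hx')) (hpos x hx')] at h
  have hx0 : 0 < x * (1 - x) := mul_pos hx'.1 (by linarith [hx'.2])
  refine (mul_nonneg_iff_of_pos_left hx0).mp ?_
  linarith

theorem antitoneOn_Ico_of_monotoneOn_Ioc {h : ℝ → ℝ} (hsymm : ∀ x, h (1 - x) = h x)
    (hmono : MonotoneOn h (Ioc 0 (1 / 2))) : AntitoneOn h (Ico (1 / 2) 1) := by
  intro x hx y hy hxy
  rw [← hsymm x, ← hsymm y]
  exact hmono ⟨by linarith [hy.2], by linarith [hy.1]⟩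
    ⟨by linarith [hx.2], by linarith [hx.1]⟩ (by linarith)

section Algebra

variable {a b c : ℝ}

/-- Concave in `v`, and nonnegative at the endpoints `v = a + b - c` (when positive) and
`v = ab / c`. -/
theorem concave_quadratic_nonneg (ha : 0 < a) (ha1 : a < 1) (hb : 0 < b) (hb1 : b < 1)
    (hac : a < c) (hbc : b < c) {v : ℝ} (hv : 0 < v) (h1 : a + b - c ≤ v)
    (h3 : c * v ≤ a * b) :
    0 ≤ -c * v ^ 2 + (a * b + c * (a + b) - c) * v + c - a * b * (a + b) := by
  have hc : 0 < c := ha.trans hac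
  have hab : a * b < c := by nlinarith
  rcases le_or_gt (a + b) c with hs | hs
  · have h0 : 0 ≤ c - a * b * (a + b) := by nlinarith [mul_pos ha hb]
    nlinarith [mul_nonneg (sub_nonneg.2 h3) h0,
      mul_nonneg (mul_nonneg hc.le hv.le) (sub_nonneg.2 h3),
      mul_nonneg (mul_nonneg hc.le hv.le) (sub_pos.2 hab).le, mul_nonneg (sub_nonneg.2 h3) hv.le]
  · have hd : 0 ≤ -(a + b - c) ^ 2 + (a + b - 1) * (a + b - c) + 1 - a * b := by
      nlinarith [mul_nonneg (sub_pos.2 hbc).le (show (0 : ℝ) ≤ 1 - (c - a) by linarith)]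
    nlinarith [mul_nonneg (sub_nonneg.2 h1) (sub_nonneg.2 h3),
      mul_nonneg (sub_nonneg.2 h1) (mul_nonneg hc.le hd),
      mul_nonneg (sub_nonneg.2 h3) (mul_nonneg hc.le hd),
      mul_nonneg (sub_nonneg.2 h3) (sub_pos.2 hab).le,
      mul_nonneg (sub_nonneg.2 h1) (sub_pos.2 hab).le, mul_pos ha hb, mul_pos hc hv]

/-- The left side is affine in `x`. If its slope is negative, compare with `x = 1`, where it
equals `v (v - (a + b - c))`; otherwise compare with the least admissible `x = 1 - cv/(ab)`. -/
theorem quadratic_nonneg_of_bounds (ha : 0 < a) (ha1 : a < 1) (hb : 0 < b) (hb1 : b < 1)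
    (hac : a < c) (hbc : b < c) {x v : ℝ} (hx1 : x < 1)
    (h1 : a + b - c ≤ v) (h2 : a * b * (1 - x) ≤ c * v) (h3 : c * v ≤ a * b) :
    0 ≤ x * v ^ 2 - ((a + b - 1) * x + 1 - c) * v + (1 - a * b) * (1 - x) := by
  have hc : 0 < c := ha.trans hac
  have hv : 0 < v := by nlinarith [mul_pos (mul_pos ha hb) (sub_pos.2 hx1)]
  rcases le_or_gt 0 (v ^ 2 - (a + b - 1) * v - (1 - a * b)) with hA | hA
  · have hg := concave_quadratic_nonneg ha ha1 hb hb1 hac hbc hv h1 h3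
    nlinarith [mul_nonneg (show 0 ≤ a * b * (x - 1) + c * v by linarith) hA,
      mul_nonneg hv.le hg, mul_pos ha hb]
  · nlinarith [mul_nonneg hv.le (sub_nonneg.2 h1),
      mul_nonpos_of_nonneg_of_nonpos (sub_pos.2 hx1).le hA.le]

theorem quadratic_form_nonneg_of_bounds (ha : 0 < a) (ha1 : a < 1) (hb : 0 < b) (hb1 : b < 1)
    (hac : a < c) (hbc : b < c) {x P V : ℝ} (hx1 : x < 1) (hP : 0 < P)
    (h1 : (a + b - c) * P ≤ V) (h2 : a * b * (1 - x) * P ≤ c * V) (h3 : c * V ≤ a * b * P) :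
    0 ≤ x * V ^ 2 - ((a + b - 1) * x + 1 - c) * V * P + (1 - a * b) * (1 - x) * P ^ 2 := by
  have hv := quadratic_nonneg_of_bounds ha ha1 hb hb1 hac hbc (v := V / P) hx1
    (by rwa [le_div_iff₀ hP]) (by rwa [mul_div_assoc', le_div_iff₀ hP])
    (by rwa [mul_div_assoc', div_le_iff₀ hP])
  have hscale : x * V ^ 2 - ((a + b - 1) * x + 1 - c) * V * P + (1 - a * b) * (1 - x) * P ^ 2 =
      P ^ 2 * (x * (V / P) ^ 2 - ((a + b - 1) * x + 1 - c) * (V / P) + (1 - a * b) * (1 - x)) :=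
    by
    field_simp
  rw [hscale]
  positivity

end Algebra

/-- `hyperF a b c` is definitionally `powSeries (hyperCoeff a b c)`. -/
noncomputable def hyperCoeff (a b c : ℝ) (n : ℕ) : ℝ :=
  ascFac a n * ascFac b n / (ascFac c n * n.factorial)

noncomputable def hyperF' (a b c : ℝ) : ℝ → ℝ := powSeries (derivCoeff (hyperCoeff a b c))

noncomputable def hyperF'' (a b c : ℝ) : ℝ → ℝ :=
  powSeries (derivCoeff (derivCoeff (hyperCoeff a b c)))

theorem ascFac_pos {a : ℝ} (ha : 0 < a) (n : ℕ) : 0 < ascFac a n := by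
  induction n with
  | zero => exact one_pos
  | succ n ih => exact mul_pos ih (by positivity)

section Hypergeometric

variable {a b c x : ℝ}

theorem hyperCoeff_pos (ha : 0 < a) (hb : 0 < b) (hc : 0 < c) (n : ℕ) :
    0 < hyperCoeff a b c n := by
  have := ascFac_pos ha n
  have := ascFac_pos hb n
  have := ascFac_pos hc n
  unfold hyperCoeff
  positivity

theorem add_mul_derivCoeff_hyperCoeff (hc : 0 < c) (n : ℕ) :
    (c + n) * derivCoeff (hyperCoeff a b c) n = (a + n) * (b + n) * hyperCoeff a b c n := by
  have := (ascFac_pos hc n).ne'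
  have : c + n ≠ 0 := by positivity
  simp only [derivCoeff, hyperCoeff, ascFac, Nat.factorial_succ]
  push_cast
  field_simp

theorem hyperCoeff_le_one (ha : 0 < a) (hb : 0 < b) (hb1 : b < 1) (hac : a < c) (n : ℕ) :
    hyperCoeff a b c n ≤ 1 := by
  have hc : 0 < c := ha.trans hac
  induction n with
  | zero => simp [hyperCoeff, ascFac]
  | succ n ih =>
    have hrec := add_mul_derivCoeff_hyperCoeff (a := a) (b := b) hc n
    have hq := hyperCoeff_pos ha hb hc n
    rw [derivCoeff] at hrec
    have hcn : 0 < (c + n) * (n + 1) := by positivity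
    have : (a + n) * (b + n) ≤ (c + n) * (n + 1) :=
      mul_le_mul (by linarith) (by linarith) (by positivity) (by positivity)
    refine le_of_mul_le_mul_left ?_ hcn
    nlinarith [mul_le_mul_of_nonneg_left ih (by positivity : (0 : ℝ) ≤ (a + n) * (b + n))]

theorem hasPolyGrowth_hyperCoeff (ha : 0 < a) (hb : 0 < b) (hb1 : b < 1) (hac : a < c) :
    HasPolyGrowth (hyperCoeff a b c) := by
  refine ⟨1, 0, fun n => ?_⟩
  rw [abs_of_pos (hyperCoeff_pos ha hb (ha.trans hac) n)]
  simpa using hyperCoeff_le_one ha hb hb1 hac n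

theorem hasDerivAt_hyperF (ha : 0 < a) (hb : 0 < b) (hb1 : b < 1) (hac : a < c) (hx : |x| < 1) :
    HasDerivAt (hyperF a b c) (hyperF' a b c x) x :=
  (hasPolyGrowth_hyperCoeff ha hb hb1 hac).hasDerivAt_powSeries hx

theorem hasDerivAt_hyperF' (ha : 0 < a) (hb : 0 < b) (hb1 : b < 1) (hac : a < c) (hx : |x| < 1) :
    HasDerivAt (hyperF' a b c) (hyperF'' a b c x) x :=
  (hasPolyGrowth_hyperCoeff ha hb hb1 hac).derivCoeff.hasDerivAt_powSeries hx

theorem hyperF_ode (ha : 0 < a) (hb : 0 < b) (hb1 : b < 1) (hac : a < c) (hx : |x| < 1) :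
    x * (1 - x) * hyperF'' a b c x + (c - (a + b + 1) * x) * hyperF' a b c x =
      a * b * hyperF a b c x := by
  set q := hyperCoeff a b c
  have hq := hasPolyGrowth_hyperCoeff ha hb hb1 hac
  have hF : HasSum (fun n => q n * x ^ n) (hyperF a b c x) := (hq.summable hx).hasSum
  have hF' : HasSum (fun n => derivCoeff q n * x ^ n) (hyperF' a b c x) :=
    (hq.derivCoeff.summable hx).hasSum
  have hxF' : HasSum (fun n => n * q n * x ^ n) (x * hyperF' a b c x) :=
    hasSum_mul_powSeries_derivCoeff (hq.derivCoeff.summable hx)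
  have hxF'' : HasSum (fun n => n * derivCoeff q n * x ^ n) (x * hyperF'' a b c x) :=
    hasSum_mul_powSeries_derivCoeff (hq.derivCoeff.derivCoeff.summable hx)
  have e : derivCoeff (fun m : ℕ => ((m : ℝ) - 1) * q m) = fun n => n * derivCoeff q n := by
    funext n
    simp only [derivCoeff]
    push_cast
    ring
  have hx2F'' : HasSum (fun n => n * ((n - 1) * q n) * x ^ n) (x * (x * hyperF'' a b c x)) := by
    have h := hasSum_mul_powSeries_derivCoeff (g := fun m : ℕ => ((m : ℝ) - 1) * q m) (x := x)
      (by rw [e]; exact hq.derivCoeff.natMul.summable hx)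
    rwa [e, show powSeries (fun n => n * derivCoeff q n) x = x * hyperF'' a b c x from
      hxF''.tsum_eq] at h
  have hcomb : HasSum (fun _ : ℕ => (0 : ℝ))
      (x * hyperF'' a b c x - x * (x * hyperF'' a b c x) + c * hyperF' a b c x -
        (a + b + 1) * (x * hyperF' a b c x) - a * b * hyperF a b c x) := by
    refine ((((hxF''.sub hx2F'').add (hF'.mul_left c)).sub (hxF'.mul_left (a + b + 1))).sub
      (hF.mul_left (a * b))).congr_fun fun n => ?_
    linear_combination
      (-x ^ n) * add_mul_derivCoeff_hyperCoeff (a := a) (b := b) (ha.trans hac) n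
  linear_combination -hasSum_zero.unique hcomb

theorem hyperF_lincomb_nonneg (ha : 0 < a) (hb : 0 < b) (hb1 : b < 1) (hac : a < c)
    (hx0 : 0 ≤ x) (hx1 : x < 1) {α β γ : ℝ}
    (hpoly : ∀ n : ℕ, 0 ≤ α * (c + n) + β * ((a + n) * (b + n)) + γ * (n * (c + n))) :
    0 ≤ α * hyperF a b c x + β * hyperF' a b c x + γ * (x * hyperF' a b c x) := by
  have hc : 0 < c := ha.trans hac
  have hx : |x| < 1 := by rwa [abs_of_nonneg hx0]
  set q := hyperCoeff a b c
  have hq := hasPolyGrowth_hyperCoeff ha hb hb1 hac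
  have hF : HasSum (fun n => q n * x ^ n) (hyperF a b c x) := (hq.summable hx).hasSum
  have hF' : HasSum (fun n => derivCoeff q n * x ^ n) (hyperF' a b c x) :=
    (hq.derivCoeff.summable hx).hasSum
  have hxF' : HasSum (fun n => n * q n * x ^ n) (x * hyperF' a b c x) :=
    hasSum_mul_powSeries_derivCoeff (hq.derivCoeff.summable hx)
  refine (((hF.mul_left α).add (hF'.mul_left β)).add (hxF'.mul_left γ)).nonneg fun n => ?_
  have hcoeff : 0 ≤ α * q n + β * derivCoeff q n + γ * (n * q n) := by
    have hcn : (0 : ℝ) < c + n := by positivity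
    refine (mul_nonneg_iff_of_pos_left hcn).mp ?_
    have h := add_mul_derivCoeff_hyperCoeff (a := a) (b := b) hc n
    have hscaled : (c + n) * (α * q n + β * derivCoeff q n + γ * (n * q n)) =
        q n * (α * (c + n) + β * ((a + n) * (b + n)) + γ * (n * (c + n))) := by
      linear_combination β * h
    rw [hscaled]
    exact mul_nonneg (hyperCoeff_pos ha hb hc n).le (hpoly n)
  have := mul_nonneg hcoeff (pow_nonneg hx0 n)
  linarith

theorem one_le_hyperF (ha : 0 < a) (hb : 0 < b) (hb1 : b < 1) (hac : a < c)
    (hx0 : 0 ≤ x) (hx1 : x < 1) : 1 ≤ hyperF a b c x := by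
  have hq := hasPolyGrowth_hyperCoeff ha hb hb1 hac
  have h : hyperCoeff a b c 0 * x ^ 0 ≤ hyperF a b c x :=
    le_hasSum (hq.summable (x := x) (by rwa [abs_of_nonneg hx0])).hasSum 0 fun n _ =>
      mul_nonneg (hyperCoeff_pos ha hb (ha.trans hac) n).le (pow_nonneg hx0 n)
  simpa [hyperCoeff, ascFac] using h

theorem hasDerivAt_mul_one_sub_mul_hyperF' (ha : 0 < a) (hb : 0 < b) (hb1 : b < 1) (hac : a < c)
    (hx : |x| < 1) :
    HasDerivAt (fun y => y * (1 - y) * hyperF' a b c y)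
      (a * b * hyperF a b c x + ((a + b - 1) * x + 1 - c) * hyperF' a b c x) x := by
  have hpoly : HasDerivAt (fun y : ℝ => y * (1 - y)) (1 * (1 - x) + x * (0 - 1)) x :=
    (hasDerivAt_id x).mul ((hasDerivAt_const x 1).sub (hasDerivAt_id x))
  refine (hpoly.mul (hasDerivAt_hyperF' ha hb hb1 hac hx)).congr_deriv ?_
  linear_combination hyperF_ode ha hb hb1 hac hx

theorem hyperF_deriv_mul_sub_le_sq (ha : 0 < a) (ha1 : a < 1) (hb : 0 < b) (hb1 : b < 1)
    (hac : a < c) (hbc : b < c) (hx0 : 0 < x) (hx1 : x < 1) :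
    (a * b * hyperF a b c x + ((a + b - 1) * x + 1 - c) * hyperF' a b c x) * hyperF a b c x -
      x * (1 - x) * hyperF' a b c x * hyperF' a b c x ≤ hyperF a b c x ^ 2 := by
  have hF := one_le_hyperF ha hb hb1 hac hx0.le hx1
  set F := hyperF a b c x
  set F' := hyperF' a b c x
  have hc : 0 < c := ha.trans hac
  have hn : ∀ n : ℕ, (0 : ℝ) ≤ n := fun n => n.cast_nonneg
  have hca : 0 < c - a := sub_pos.2 hac
  have hcb : 0 < c - b := sub_pos.2 hbc
  have hV_ge : 0 ≤ (c - a - b) * F + 1 * F' + -1 * (x * F') :=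
    hyperF_lincomb_nonneg ha hb hb1 hac hx0.le hx1 fun n =>
      (mul_pos hca hcb).le.trans_eq (by ring)
  have hF'_ge : 0 ≤ -(a * b) * F + c * F' + 0 * (x * F') :=
    hyperF_lincomb_nonneg ha hb hb1 hac hx0.le hx1 fun n => by
      have : 0 ≤ (n : ℝ) * (c * n + c * a + b * (c - a)) := by
        have := mul_pos hb hca
        positivity
      exact this.trans_eq (by ring)
  have hV_le : 0 ≤ a * b * F + -c * F' + c * (x * F') :=
    hyperF_lincomb_nonneg ha hb hb1 hac hx0.le hx1 fun n =>
      (mul_nonneg (hn n) (mul_pos hca hcb).le).trans_eq (by ring)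
  have hQ := quadratic_form_nonneg_of_bounds ha ha1 hb hb1 hac hbc hx1 (P := F)
    (V := (1 - x) * F') (zero_lt_one.trans_le hF) (by linarith)
    (by nlinarith [mul_nonneg (sub_pos.2 hx1).le hF'_ge]) (by linarith)
  have hscaled : 0 ≤ (1 - x) * (F ^ 2 - ((a * b * F + ((a + b - 1) * x + 1 - c) * F') * F -
      x * (1 - x) * F' * F')) := hQ.trans_eq (by ring)
  linarith [(mul_nonneg_iff_of_pos_left (sub_pos.2 hx1)).mp hscaled]

theorem antitoneOn_hyper_logDeriv (ha : 0 < a) (ha1 : a < 1) (hb : 0 < b) (hb1 : b < 1)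
    (hac : a < c) (hbc : b < c) :
    AntitoneOn
      (fun x => x * (1 - x) * (hyperF a b c x + x * hyperF' a b c x) / (x * hyperF a b c x))
      (Ioo 0 1) := by
  have hF : ∀ y ∈ Ioo (0 : ℝ) 1, 0 < hyperF a b c y := fun y hy =>
    zero_lt_one.trans_le (one_le_hyperF ha hb hb1 hac hy.1.le hy.2)
  have habs : ∀ y ∈ Ioo (0 : ℝ) 1, |y| < 1 := fun y hy => by rw [abs_of_pos hy.1]; exact hy.2
  have hderiv : ∀ y ∈ Ioo (0 : ℝ) 1,
      HasDerivAt (fun y => 1 - y + y * (1 - y) * hyperF' a b c y / hyperF a b c y)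
        (-1 + ((a * b * hyperF a b c y + ((a + b - 1) * y + 1 - c) * hyperF' a b c y) *
          hyperF a b c y - y * (1 - y) * hyperF' a b c y * hyperF' a b c y) /
            hyperF a b c y ^ 2) y :=
    fun y hy => (((hasDerivAt_const y 1).sub (hasDerivAt_id y)).add
      ((hasDerivAt_mul_one_sub_mul_hyperF' ha hb hb1 hac (habs y hy)).div
        (hasDerivAt_hyperF ha hb hb1 hac (habs y hy)) (hF y hy).ne')).congr_deriv (by ring)
  have hanti := antitoneOn_of_hasDerivWithinAt_nonpos (convex_Ioo (0 : ℝ) 1)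
    (fun y hy => (hderiv y hy).continuousAt.continuousWithinAt)
    (by simpa only [interior_Ioo] using fun y hy => (hderiv y hy).hasDerivWithinAt)
    (by
      simp only [interior_Ioo]
      intro y hy
      have := div_le_one_of_le₀ (hyperF_deriv_mul_sub_le_sq ha ha1 hb hb1 hac hbc hy.1 hy.2)
        (sq_nonneg _)
      linarith)
  refine hanti.congr fun y hy => ?_
  have := (hF y hy).ne'
  have := hy.1.ne'
  field_simp

end Hypergeometric

theorem stmt15_general (a b c : ℝ) (ha : a ∈ Set.Ioo (0:ℝ) 1) (hb : b ∈ Set.Ioo (0:ℝ) 1)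
    (hac : a < c) (hbc : b < c) :
    MonotoneOn (fun x => x * (1 - x) * hyperF a b c x * hyperF a b c (1 - x))
        (Set.Ioc 0 (1/2)) ∧
      AntitoneOn (fun x => x * (1 - x) * hyperF a b c x * hyperF a b c (1 - x))
        (Set.Ico (1/2) 1) := by
  obtain ⟨ha0, ha1⟩ := ha
  obtain ⟨hb0, hb1⟩ := hb
  have hderiv : ∀ x ∈ Ioo (0 : ℝ) 1,
      HasDerivAt (fun x => x * hyperF a b c x) (hyperF a b c x + x * hyperF' a b c x) x :=
    fun x hx => ((hasDerivAt_id x).mul (hasDerivAt_hyperF ha0 hb0 hb1 hac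
      (by rw [abs_of_pos hx.1]; exact hx.2))).congr_deriv (by simp)
  have hpos : ∀ x ∈ Ioo (0 : ℝ) 1, 0 < x * hyperF a b c x := fun x hx =>
    mul_pos hx.1 (zero_lt_one.trans_le (one_le_hyperF ha0 hb0 hb1 hac hx.1.le hx.2))
  have hmono : MonotoneOn (fun x => x * (1 - x) * hyperF a b c x * hyperF a b c (1 - x))
      (Ioc 0 (1 / 2)) :=
    (monotoneOn_mul_comp_one_sub hderiv hpos (antitoneOn_hyper_logDeriv ha0 ha1 hb0 hb1 hac hbc)
      ).congr fun x _ => by ring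
  refine ⟨hmono, antitoneOn_Ico_of_monotoneOn_Ioc (fun x => ?_) hmono⟩
  simp only [sub_sub_cancel]
  ring

/-- for `a,b ∈ (0,1)`, `c > 0`, `a < c`, `b < c`, the function
`f(x) = x(1−x)F(x)F(1−x)` is increasing on `(0,1/2]` and decreasing on `[1/2,1)`. -/
theorem stmt15 (a b c : ℝ) (ha : a ∈ Set.Ioo (0:ℝ) 1) (hb : b ∈ Set.Ioo (0:ℝ) 1)
    (hc : 0 < c) (hac : a < c) (hbc : b < c) :
    MonotoneOn (fun x => x * (1 - x) * hyperF a b c x * hyperF a b c (1 - x))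
        (Set.Ioc 0 (1/2)) ∧
      AntitoneOn (fun x => x * (1 - x) * hyperF a b c x * hyperF a b c (1 - x))
        (Set.Ico (1/2) 1) :=
  stmt15_general a b c ha hb hac hbc
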